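/- arXiv:0712.3837 — 3 statements merged into one kernel-verified Lean document; each statement's English description precedes it below -/
import Mathlib

section
/- Let N be a standard Poisson process and ε > 0, and define the Kac-Stroock kernel θ_ε(x) = ε^{-1} (-1)^{N(x/ε²)}. Then for any 0 ≤ x₁ ≤ y₁ ≤ x₂ ≤ y₂ ≤ ... ≤ xₙ ≤ yₙ (pairs ordered so that each pair {xᵢ, yᵢ} precedes {x_{i+1}, y_{i+1}}), E[∏_{i=1}^n θ_ε(xᵢ) θ_ε(yᵢ)] = ε^{-2n} exp(-2 ∑_{i=1}^n (yᵢ - xᵢ)/ε²). -/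
/-!
Since `θ_ε(x) θ_ε(y) = ε⁻² (-1)^(N(y/ε²) - N(x/ε²))`, the integrand is `ε^{-2n}` times a product
of signs of the increments of `N` over `[xᵢ/ε², yᵢ/ε²]`. These are the even-indexed increments
along the monotone sequence `x₁/ε² ≤ y₁/ε² ≤ x₂/ε² ≤ ⋯ ≤ yₙ/ε²`, hence independent, so the
expectation factors; and for `X ~ Poisson(λ)`, `E[(-1)^X] = e^{-λ} ∑ (-λ)^k / k! = e^{-2λ}`.
-/

open MeasureTheory ProbabilityTheory
open scoped NNReal

lemma integral_neg_one_pow_poissonMeasure (r : ℝ≥0) :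
    ∫ k, (-1 : ℝ) ^ k ∂poissonMeasure r = Real.exp (-(2 * r)) := by
  rw [integral_poissonMeasure]
  calc ∑' k : ℕ, (Real.exp (-r) * r ^ k / k.factorial) • (-1 : ℝ) ^ k
      = Real.exp (-r) * ∑' k : ℕ, (-(r : ℝ)) ^ k / k.factorial := by
        rw [← tsum_mul_left]
        congr with k
        rw [smul_eq_mul, neg_pow]
        ring
    _ = Real.exp (-(2 * r)) := by
        rw [(NormedSpace.expSeries_div_hasSum_exp (-(r : ℝ))).tsum_eq, ← Real.exp_eq_exp_ℝ,
          ← Real.exp_add]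
        ring_nf

section Poisson

variable {Ω : Type*} [MeasurableSpace Ω] {P : Measure Ω} {X : Ω → ℕ}

lemma hasLaw_poissonMeasure_of_measure_eq (hX : Measurable X) {r : ℝ≥0}
    (hdist : ∀ k : ℕ, P {ω | X ω = k}
      = ENNReal.ofReal (Real.exp (-r) * r ^ k / k.factorial)) :
    HasLaw X (poissonMeasure r) P where
  aemeasurable := hX.aemeasurable
  map_eq := Measure.ext_of_singleton fun k => by
    rw [Measure.map_apply hX (measurableSet_singleton k), poissonMeasure_singleton]
    exact hdist k

lemma integral_neg_one_pow_of_measure_eq_poisson (hX : Measurable X) {l : ℝ} (hl : 0 ≤ l)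
    (hdist : ∀ k : ℕ, P {ω | X ω = k}
      = ENNReal.ofReal (Real.exp (-l) * l ^ k / k.factorial)) :
    ∫ ω, (-1 : ℝ) ^ X ω ∂P = Real.exp (-(2 * l)) := by
  lift l to ℝ≥0 using hl
  exact ((hasLaw_poissonMeasure_of_measure_eq hX hdist).integral_comp .of_discrete).trans
    (integral_neg_one_pow_poissonMeasure l)

end Poisson

lemma neg_one_pow_mul_neg_one_pow_of_le {R : Type*} [Monoid R] [HasDistribNeg R] {a b : ℕ}
    (hab : a ≤ b) : (-1 : R) ^ a * (-1) ^ b = (-1) ^ (b - a) := by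
  rw [← Nat.add_sub_cancel' hab, pow_add, ← mul_assoc, ← pow_add, Even.neg_one_pow ⟨a, rfl⟩,
    one_mul, Nat.add_sub_cancel_left]

section Interleave

variable {α : Type*} [ConditionallyCompleteLinearOrder α] {n : ℕ}

/-- The sequence `s 0, t 0, s 1, t 1, …, s (n-1), t (n-1)`, continued by `⨆ i, t i` so that it
stays monotone on all of `ℕ`. -/
noncomputable def interleave (s t : Fin n → α) (k : ℕ) : α :=
  if h : k / 2 < n then (if k % 2 = 0 then s else t) ⟨k / 2, h⟩ else ⨆ i, t i

variable {s t : Fin n → α}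

lemma interleave_two_mul (i : Fin n) : interleave s t (2 * i) = s i := by
  have := i.isLt
  rw [interleave, dif_pos (by omega), if_pos (by omega)]
  congr 1; ext; simp

lemma interleave_two_mul_add_one (i : Fin n) : interleave s t (2 * i + 1) = t i := by
  have := i.isLt
  rw [interleave, dif_pos (by omega), if_neg (by omega)]
  congr 1; ext; simp; omega

lemma interleave_le_iSup (hst : ∀ i, s i ≤ t i) (k : ℕ) : interleave s t k ≤ ⨆ i, t i := by
  unfold interleave
  split_ifs
  · exact (hst _).trans (le_ciSup (Finite.bddAbove_range t) _)
  · exact le_ciSup (Finite.bddAbove_range t) _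
  · exact le_rfl

lemma monotone_interleave (hst : ∀ i, s i ≤ t i)
    (hts : ∀ (i : Fin n) (h : (i : ℕ) + 1 < n), t i ≤ s ⟨i + 1, h⟩) :
    Monotone (interleave s t) := by
  refine monotone_nat_of_le_succ fun k => ?_
  obtain ⟨j, rfl | rfl⟩ := Nat.even_or_odd' k
  · by_cases hj : j < n
    · simpa only [interleave_two_mul ⟨j, hj⟩, interleave_two_mul_add_one ⟨j, hj⟩] using hst _
    · rw [interleave, interleave, dif_neg (by omega), dif_neg (by omega)]
  · by_cases hj : j + 1 < n
    · rw [show 2 * j + 1 + 1 = 2 * ((⟨j + 1, hj⟩ : Fin n) : ℕ) by simp; ring,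
        interleave_two_mul, interleave_two_mul_add_one ⟨j, by omega⟩]
      exact hts ⟨j, by omega⟩ hj
    · have hlast : interleave s t (2 * j + 1 + 1) = ⨆ i, t i := dif_neg (by omega)
      exact hlast ▸ interleave_le_iSup hst _

lemma iIndepFun_increments_of_ordered {Ω : Type*} [MeasurableSpace Ω] {P : Measure Ω}
    {N : α → Ω → ℕ}
    (hN : ∀ (m : ℕ) (u : Fin (m + 1) → α), Monotone u →
      iIndepFun (fun i : Fin m => fun ω => N (u i.succ) ω - N (u i.castSucc) ω) P)
    (hst : ∀ i, s i ≤ t i) (hts : ∀ (i : Fin n) (h : (i : ℕ) + 1 < n), t i ≤ s ⟨i + 1, h⟩) :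
    iIndepFun (fun i ω => N (t i) ω - N (s i) ω) P := by
  have hall := hN (2 * n) (fun k => interleave s t k)
    fun a b hab => monotone_interleave hst hts hab
  have heven := hall.precomp (g := fun i : Fin n => (⟨2 * i, by omega⟩ : Fin (2 * n)))
    fun i j h => Fin.ext (by simpa using h)
  convert heven using 3 with i
  simp [interleave_two_mul, interleave_two_mul_add_one]

end Interleave

theorem stmt_3_general {Ω : Type*} [MeasurableSpace Ω] (P : Measure Ω)
    (N : ℝ → Ω → ℕ) (hNmeas : ∀ t, Measurable (N t))
    (hNmono : ∀ ω, Monotone fun t => N t ω)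
    (hNindep : ∀ (m : ℕ) (u : Fin (m + 1) → ℝ), Monotone u →
      iIndepFun
        (fun i : Fin m => fun ω => N (u i.succ) ω - N (u i.castSucc) ω) P)
    (hNdist : ∀ s t : ℝ, 0 ≤ s → s ≤ t → ∀ k : ℕ,
      P {ω | N t ω - N s ω = k}
        = ENNReal.ofReal (Real.exp (-(t - s)) * (t - s) ^ k / (Nat.factorial k)))
    (ε : ℝ)
    (θ : ℝ → Ω → ℝ) (hθ : ∀ x ω, θ x ω = ε⁻¹ * (-1 : ℝ) ^ N (x / ε ^ 2) ω)
    (n : ℕ) (x y : Fin n → ℝ)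
    (hx0 : ∀ i, 0 ≤ x i) (hxy : ∀ i, x i ≤ y i)
    (hord : ∀ i : Fin n, ∀ h : (i : ℕ) + 1 < n, y i ≤ x ⟨(i : ℕ) + 1, h⟩) :
    ∫ ω, ∏ i, θ (x i) ω * θ (y i) ω ∂P
      = (ε ^ (2 * n))⁻¹ * Real.exp (-2 * ∑ i, (y i - x i) / ε ^ 2) := by
  set D : Fin n → Ω → ℕ := fun i ω => N (y i / ε ^ 2) ω - N (x i / ε ^ 2) ω
  have hxy' : ∀ i, x i / ε ^ 2 ≤ y i / ε ^ 2 := fun i => by gcongr; exact hxy i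
  have hpair : ∀ i ω, θ (x i) ω * θ (y i) ω = (ε ^ 2)⁻¹ * (-1 : ℝ) ^ D i ω := fun i ω => by
    rw [hθ, hθ, mul_mul_mul_comm, neg_one_pow_mul_neg_one_pow_of_le (hNmono ω (hxy' i)),
      ← mul_inv, ← sq]
  have hindep : iIndepFun D P :=
    iIndepFun_increments_of_ordered hNindep hxy' fun i h => by gcongr; exact hord i h
  have hsign : ∀ i, ∫ ω, (-1 : ℝ) ^ D i ω ∂P = Real.exp (-(2 * ((y i - x i) / ε ^ 2))) :=
    fun i => by
      rw [integral_neg_one_pow_of_measure_eq_poisson (X := D i) ((hNmeas _).sub (hNmeas _))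
        (by linarith [hxy' i]) (hNdist _ _ (by have := hx0 i; positivity) (hxy' i)), sub_div]
  simp_rw [hpair, Finset.prod_mul_distrib, Finset.prod_const, Finset.card_univ, Fintype.card_fin]
  rw [integral_const_mul, hindep.integral_fun_prod_comp (f := fun _ k => (-1 : ℝ) ^ k)
    (fun i => ((hNmeas _).sub (hNmeas _)).aemeasurable) fun _ => .of_discrete]
  simp_rw [hsign, ← Real.exp_sum, inv_pow, ← pow_mul, Finset.mul_sum]
  ring_nf

/-- Kac–Stroock kernel: for a standard Poisson process `N` (independent increments and
Poisson-distributed increments), `θ_ε(x) = ε⁻¹ (-1)^{N(x/ε²)}`, and ordered points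
`0 ≤ x₁ ≤ y₁ ≤ x₂ ≤ y₂ ≤ ⋯ ≤ xₙ ≤ yₙ`, one has
`E[∏ θ_ε(xᵢ) θ_ε(yᵢ)] = ε^{-2n} exp(-2 Σ (yᵢ - xᵢ)/ε²)`. -/
theorem stmt_3 {Ω : Type*} [MeasurableSpace Ω] (P : Measure Ω) [IsProbabilityMeasure P]
    (N : ℝ → Ω → ℕ) (hNmeas : ∀ t, Measurable (N t))
    (hN0 : ∀ ω, N 0 ω = 0)
    (hNmono : ∀ ω, Monotone fun t => N t ω)
    (hNindep : ∀ (m : ℕ) (u : Fin (m + 1) → ℝ), Monotone u →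
      iIndepFun
        (fun i : Fin m => fun ω => N (u i.succ) ω - N (u i.castSucc) ω) P)
    (hNdist : ∀ s t : ℝ, 0 ≤ s → s ≤ t → ∀ k : ℕ,
      P {ω | N t ω - N s ω = k}
        = ENNReal.ofReal (Real.exp (-(t - s)) * (t - s) ^ k / (Nat.factorial k)))
    (ε : ℝ) (hε : 0 < ε)
    (θ : ℝ → Ω → ℝ) (hθ : ∀ x ω, θ x ω = ε⁻¹ * (-1 : ℝ) ^ N (x / ε ^ 2) ω)
    (n : ℕ) (x y : Fin n → ℝ)
    (hx0 : ∀ i, 0 ≤ x i) (hxy : ∀ i, x i ≤ y i)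
    (hord : ∀ i : Fin n, ∀ h : (i : ℕ) + 1 < n, y i ≤ x ⟨(i : ℕ) + 1, h⟩) :
    ∫ ω, ∏ i, θ (x i) ω * θ (y i) ω ∂P
      = (ε ^ (2 * n))⁻¹ * Real.exp (-2 * ∑ i, (y i - x i) / ε ^ 2) :=
  stmt_3_general P N hNmeas hNmono hNindep hNdist ε θ hθ n x y hx0 hxy hord
end

section
/- Let ξ₁, ξ₂, … be i.i.d. real random variables with E ξ₁ = 0 and Var ξ₁ = 1, and for ε ∈ (0,1) define the Donsker kernel θ_ε(s) = ε^{-1} ∑_{k≥1} ξ_k 1_{[k-1,k)}(s/ε²). Then for every symmetric f ∈ L²([0,T]ⁿ) and every t ∈ [0,T], E[( ∫_{[0,t]ⁿ} f(x₁,…,xₙ) ∏_{i=1}^n θ_ε(x_i) ∏_{i≠j} 1_{|x_i - x_j| > ε} dx )²] ≤ n! ‖f‖²_{L²([0,T]ⁿ)}. -/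
/-!
Write `θ_ε(s) = ε⁻¹ ξ_{K s}` with cell index `K s = ⌊s / ε²⌋₊`, and
`g = f · ∏_{i ≠ j} 1_{|x_i - x_j| > ε}`. On the support of `g` distinct coordinates are more than
`ε > ε²` apart, so their cell indices are distinct. By Fubini the second moment is
`ε^{-2n} ∫∫ g(x) g(y) E[∏ ξ_{K x_i} ∏ ξ_{K y_i}] dx dy`, and by independence, `E ξ = 0` and
`E ξ² = 1` the expectation is `1` when the cell indices of `y` are a permutation of those of `x`,
and `0` otherwise. Bounding `|g(x) g(y)| ≤ (g(x)² + g(y)²) / 2` and noting that for fixed `x` those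
`y` lie in `n!` boxes of volume `ε^{2n}` gives `n! ε^{2n} ∫ g²`; finally `|g| ≤ |f|`.
-/

open MeasureTheory ProbabilityTheory
open scoped ENNReal

namespace ProbabilityTheory

variable {Ω ι : Type*} [MeasurableSpace Ω] {P : Measure Ω} {g : ι → Ω → ℝ}

lemma iIndepFun.integrable_finsetProd (hindep : iIndepFun g P) (hmeas : ∀ i, Measurable (g i))
    (hint : ∀ i, Integrable (g i) P) (s : Finset ι) :
    Integrable (fun ω => ∏ i ∈ s, g i ω) P := by
  classical
  have := hindep.isProbabilityMeasure
  induction s using Finset.induction_on with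
  | empty => simp
  | insert a s ha ih =>
    have hprod : (fun ω => ∏ i ∈ insert a s, g i ω) = g a * ∏ i ∈ s, g i := by
      ext ω; simp [Finset.prod_insert ha, Finset.prod_apply]
    rw [hprod]
    exact (hindep.indepFun_finsetProd_of_notMem hmeas ha).symm.integrable_mul (hint a)
      (by simpa only [Finset.prod_fn] using ih)

lemma iIndepFun.integral_finsetProd (hindep : iIndepFun g P) (hmeas : ∀ i, Measurable (g i))
    (s : Finset ι) : ∫ ω, ∏ i ∈ s, g i ω ∂P = ∏ i ∈ s, ∫ ω, g i ω ∂P := by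
  have := (hindep.precomp Subtype.val_injective).integral_fun_prod_eq_prod_integral
    fun i : s => (hmeas i).aestronglyMeasurable
  rwa [Finset.prod_coe_sort s fun i => ∫ ω, g i ω ∂P,
    funext fun ω => Finset.prod_coe_sort s fun i => g i ω] at this

end ProbabilityTheory

lemma Finset.prod_mul_prod_eq_prod_union_pow {α M : Type*} [DecidableEq α] [CommMonoid M]
    (S R : Finset α) (x : α → M) :
    (∏ m ∈ S, x m) * ∏ m ∈ R, x m =
      ∏ m ∈ S ∪ R, x m ^ ((if m ∈ S then 1 else 0) + (if m ∈ R then 1 else 0)) := by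
  simp only [pow_add, Finset.prod_mul_distrib, pow_ite, pow_one, pow_zero]
  rw [Finset.prod_ite_mem, Finset.prod_ite_mem, Finset.union_inter_cancel_left,
    Finset.union_inter_cancel_right]

section Moments

variable {Ω : Type*} [MeasurableSpace Ω] {P : Measure Ω} {ξ : ℕ → Ω → ℝ}
  (hmeas : ∀ m, Measurable (ξ m)) (hindep : iIndepFun ξ P) (hL2 : ∀ m, MemLp (ξ m) 2 P)
  (hmean : ∀ m, ∫ ω, ξ m ω ∂P = 0) (hvar : ∀ m, ∫ ω, ξ m ω ^ 2 ∂P = 1)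
include hmeas hindep

include hL2 in
lemma integrable_prod_mul_prod (S R : Finset ℕ) :
    Integrable (fun ω => (∏ m ∈ S, ξ m ω) * ∏ m ∈ R, ξ m ω) P := by
  classical
  have := hindep.isProbabilityMeasure
  simp_rw [Finset.prod_mul_prod_eq_prod_union_pow]
  refine (hindep.comp (fun m x => x ^ ((if m ∈ S then 1 else 0) + (if m ∈ R then 1 else 0)))
    fun m => measurable_id.pow_const _).integrable_finsetProd
    (fun m => (hmeas m).pow_const _) (fun m => ?_) _
  split_ifs <;> simp [Function.comp_def, (hL2 m).integrable one_le_two, (hL2 m).integrable_sq]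

include hmean hvar in
lemma integral_prod_mul_prod (S R : Finset ℕ) :
    ∫ ω, (∏ m ∈ S, ξ m ω) * ∏ m ∈ R, ξ m ω ∂P = if S = R then 1 else 0 := by
  classical
  simp_rw [Finset.prod_mul_prod_eq_prod_union_pow]
  have hprod := (hindep.comp (fun m x => x ^ ((if m ∈ S then 1 else 0) + (if m ∈ R then 1 else 0)))
    fun m => measurable_id.pow_const _).integral_finsetProd (fun m => (hmeas m).pow_const _) (S ∪ R)
  simp only [Function.comp_apply] at hprod
  rw [hprod]
  -- an index in only one of `S`, `R` contributes `E ξ = 0`, one in both contributes `E ξ² = 1`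
  have hfactor : ∀ m ∈ S ∪ R,
      ∫ ω, ξ m ω ^ ((if m ∈ S then 1 else 0) + (if m ∈ R then 1 else 0)) ∂P =
        if (m ∈ S ↔ m ∈ R) then 1 else 0 := by
    intro m hm
    by_cases hS : m ∈ S <;> by_cases hR : m ∈ R <;> simp_all
  rw [Finset.prod_congr rfl hfactor, Finset.prod_boole]
  congr 1
  simp only [Finset.ext_iff, eq_iff_iff]
  exact ⟨fun h m => if hm : m ∈ S ∪ R then h m hm else by simp_all, fun h m _ => h m⟩

include hL2 hmean hvar in
lemma integral_abs_prod_mul_prod_le_one (S R : Finset ℕ) :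
    ∫ ω, |(∏ m ∈ S, ξ m ω) * ∏ m ∈ R, ξ m ω| ∂P ≤ 1 := by
  have hsq : ∀ T : Finset ℕ, ∫ ω, (∏ m ∈ T, ξ m ω) * ∏ m ∈ T, ξ m ω ∂P = 1 := fun T => by
    simp [integral_prod_mul_prod hmeas hindep hmean hvar]
  calc ∫ ω, |(∏ m ∈ S, ξ m ω) * ∏ m ∈ R, ξ m ω| ∂P
      ≤ ∫ ω, ((∏ m ∈ S, ξ m ω) * (∏ m ∈ S, ξ m ω) +
          (∏ m ∈ R, ξ m ω) * ∏ m ∈ R, ξ m ω) / 2 ∂P := by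
        refine integral_mono (integrable_prod_mul_prod hmeas hindep hL2 S R).abs
          (((integrable_prod_mul_prod hmeas hindep hL2 S S).add
            (integrable_prod_mul_prod hmeas hindep hL2 R R)).div_const 2) fun ω => ?_
        rw [abs_mul]
        nlinarith [sq_nonneg (|∏ m ∈ S, ξ m ω| - |∏ m ∈ R, ξ m ω|), sq_abs (∏ m ∈ S, ξ m ω),
          sq_abs (∏ m ∈ R, ξ m ω)]
    _ = 1 := by
        rw [integral_div, integral_add (integrable_prod_mul_prod hmeas hindep hL2 S S)
          (integrable_prod_mul_prod hmeas hindep hL2 R R), hsq, hsq]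
        norm_num

end Moments

section Cells

variable {α ι : Type*} (K : α → ℕ)

def cellPermPairs : Set ((ι → α) × (ι → α)) :=
  {z | ∃ σ : Equiv.Perm ι, ∀ i, K (z.2 (σ i)) = K (z.1 i)}

variable {K}

lemma measurableSet_cellPermPairs [Finite ι] [MeasurableSpace α] (hK : Measurable K) :
    MeasurableSet (cellPermPairs (ι := ι) K) := by
  have : cellPermPairs (ι := ι) K =
      ⋃ σ : Equiv.Perm ι, ⋂ i, {z | K (z.2 (σ i)) = K (z.1 i)} := by
    ext z; simp [cellPermPairs]
  rw [this]
  exact .iUnion fun σ => .iInter fun i => measurableSet_eq_fun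
    (hK.comp ((measurable_pi_apply _).comp measurable_snd))
    (hK.comp ((measurable_pi_apply _).comp measurable_fst))

lemma preimage_swap_cellPermPairs :
    Prod.swap ⁻¹' cellPermPairs (ι := ι) K = cellPermPairs K := by
  have key : ∀ z : (ι → α) × (ι → α), z ∈ cellPermPairs K → z.swap ∈ cellPermPairs K :=
    fun z ⟨σ, hσ⟩ => ⟨σ.symm, fun i => by simpa using (hσ (σ.symm i)).symm⟩
  ext z
  exact ⟨fun h => key _ h, key z⟩

lemma mk_mem_cellPermPairs_of_image_eq [Fintype ι] {x y : ι → α}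
    (hx : Function.Injective (K ∘ x)) (hy : Function.Injective (K ∘ y))
    (h : Finset.univ.image (K ∘ x) = Finset.univ.image (K ∘ y)) :
    (x, y) ∈ cellPermPairs K := by
  have hrange : Set.range (K ∘ x) = Set.range (K ∘ y) := by
    simpa [Set.ext_iff, Finset.ext_iff] using h
  refine ⟨(Equiv.ofInjective _ hx).trans ((Equiv.setCongr hrange).trans
    (Equiv.ofInjective _ hy).symm), fun i => ?_⟩
  simpa using Equiv.apply_ofInjective_symm hy ⟨K (x i), hrange ▸ ⟨i, rfl⟩⟩

lemma measure_preimage_mk_cellPermPairs_le [Fintype ι] [DecidableEq ι] [MeasurableSpace α]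
    {μ : Measure α} [SigmaFinite μ] {c : ℝ≥0∞} (hc : ∀ m, μ (K ⁻¹' {m}) ≤ c) (x : ι → α) :
    Measure.pi (fun _ : ι => μ) (Prod.mk x ⁻¹' cellPermPairs K) ≤
      (Fintype.card ι).factorial * c ^ Fintype.card ι := by
  have hsub : Prod.mk x ⁻¹' cellPermPairs K ⊆
      ⋃ σ : Equiv.Perm ι, Set.univ.pi fun j => K ⁻¹' {K (x (σ.symm j))} := by
    rintro y ⟨σ, hσ⟩
    exact Set.mem_iUnion.mpr ⟨σ, fun j _ => by simpa using hσ (σ.symm j)⟩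
  calc _ ≤ ∑ σ : Equiv.Perm ι,
        Measure.pi (fun _ : ι => μ) (Set.univ.pi fun j => K ⁻¹' {K (x (σ.symm j))}) :=
        (measure_mono hsub).trans (measure_iUnion_fintype_le _ _)
    _ ≤ ∑ _σ : Equiv.Perm ι, c ^ Fintype.card ι := by
        gcongr with σ
        rw [Measure.pi_pi]
        exact Finset.prod_le_pow_card _ _ _ fun j _ => hc _
    _ = _ := by simp [Fintype.card_perm]

end Cells

lemma setIntegral_abs_mul_abs_le_of_preimage_swap_eq {β : Type*} [MeasurableSpace β]
    {ν : Measure β} [IsFiniteMeasure ν] {R : Set (β × β)} (hR : MeasurableSet R)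
    (hswap : Prod.swap ⁻¹' R = R) {C : ℝ} (hslice : ∀ x, ν.real (Prod.mk x ⁻¹' R) ≤ C)
    {g : β → ℝ} (hg : MemLp g 2 ν) :
    ∫ z in R, |g z.1| * |g z.2| ∂ν.prod ν ≤ C * ∫ x, g x ^ 2 ∂ν := by
  have hg2 : Integrable (fun x => g x ^ 2) ν := hg.integrable_sq
  have hfst : Integrable (fun z : β × β => g z.1 ^ 2) ((ν.prod ν).restrict R) :=
    (hg2.comp_fst ν).restrict
  have hsnd : Integrable (fun z : β × β => g z.2 ^ 2) ((ν.prod ν).restrict R) :=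
    (hg2.comp_snd ν).restrict
  have hsymm : ∫ z in R, g z.2 ^ 2 ∂ν.prod ν = ∫ z in R, g z.1 ^ 2 ∂ν.prod ν := by
    rw [← integral_indicator hR, ← integral_indicator hR, ← integral_prod_swap]
    congr 1 with z
    have hz : z.swap ∈ R ↔ z ∈ R := by rw [← Set.mem_preimage, hswap]
    by_cases hzR : z ∈ R <;> simp [Set.indicator, hzR, hz]
  have hslices : ∫ z in R, g z.1 ^ 2 ∂ν.prod ν = ∫ x, ν.real (Prod.mk x ⁻¹' R) * g x ^ 2 ∂ν := by
    rw [← integral_indicator hR, integral_prod _ ((hg2.comp_fst ν).indicator hR)]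
    congr 1 with x
    rw [← smul_eq_mul, ← setIntegral_const, ← integral_indicator (measurable_prodMk_left hR)]
    rfl
  calc ∫ z in R, |g z.1| * |g z.2| ∂ν.prod ν
      ≤ ∫ z in R, (g z.1 ^ 2 + g z.2 ^ 2) / 2 ∂ν.prod ν := by
        refine integral_mono (((hg.integrable one_le_two).abs.mul_prod
          (hg.integrable one_le_two).abs).restrict) ((hfst.add hsnd).div_const 2) fun z => ?_
        nlinarith [sq_nonneg (|g z.1| - |g z.2|), sq_abs (g z.1), sq_abs (g z.2)]
    _ = ∫ x, ν.real (Prod.mk x ⁻¹' R) * g x ^ 2 ∂ν := by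
        rw [integral_div, integral_add hfst hsnd, hsymm, hslices]
        ring
    _ ≤ ∫ x, C * g x ^ 2 ∂ν := by
        refine integral_mono_of_nonneg (ae_of_all _ fun x => by positivity)
          (hg2.const_mul C) (ae_of_all _ fun x => ?_)
        exact mul_le_mul_of_nonneg_right (hslice x) (sq_nonneg _)
    _ = C * ∫ x, g x ^ 2 ∂ν := integral_const_mul C _

lemma prod_cell_eq_prod_image {Ω α ι : Type*} [Fintype ι] {K : α → ℕ} {x : ι → α}
    (hx : Function.Injective (K ∘ x)) (ξ : ℕ → Ω → ℝ) (ω : Ω) :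
    ∏ i, ξ (K (x i)) ω = ∏ m ∈ Finset.univ.image (K ∘ x), ξ m ω :=
  (Finset.prod_image (f := (ξ · ω)) fun _ _ _ _ h => hx h).symm

section CellPairs

variable {Ω : Type*} [MeasurableSpace Ω] {P : Measure Ω} {ξ : ℕ → Ω → ℝ}
  (hmeas : ∀ m, Measurable (ξ m)) (hindep : iIndepFun ξ P) (hL2 : ∀ m, MemLp (ξ m) 2 P)
  (hmean : ∀ m, ∫ ω, ξ m ω ∂P = 0) (hvar : ∀ m, ∫ ω, ξ m ω ^ 2 ∂P = 1)
  {α ι : Type*} [Fintype ι] {K : α → ℕ} (g : (ι → α) → ℝ) {x y : ι → α}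
  (hx : g x ≠ 0 → Function.Injective (K ∘ x)) (hy : g y ≠ 0 → Function.Injective (K ∘ y))
include hmeas hindep hx hy

include hL2 in
lemma integrable_mul_prod_cell_mul_prod_cell :
    Integrable (fun ω => g x * g y * ((∏ i, ξ (K (x i)) ω) * ∏ i, ξ (K (y i)) ω)) P := by
  rcases eq_or_ne (g x * g y) 0 with h0 | h0
  · simp [h0]
  have hx' := hx (left_ne_zero_of_mul h0)
  have hy' := hy (right_ne_zero_of_mul h0)
  simp only [prod_cell_eq_prod_image hx', prod_cell_eq_prod_image hy']
  exact (integrable_prod_mul_prod hmeas hindep hL2 _ _).const_mul _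

include hL2 hmean hvar in
lemma integral_norm_mul_prod_cell_mul_prod_cell_le :
    ∫ ω, ‖g x * g y * ((∏ i, ξ (K (x i)) ω) * ∏ i, ξ (K (y i)) ω)‖ ∂P ≤ |g x| * |g y| := by
  rcases eq_or_ne (g x * g y) 0 with h0 | h0
  · simp only [h0, zero_mul, norm_zero, integral_zero]
    positivity
  have hx' := hx (left_ne_zero_of_mul h0)
  have hy' := hy (right_ne_zero_of_mul h0)
  simp only [prod_cell_eq_prod_image hx', prod_cell_eq_prod_image hy', norm_mul, Real.norm_eq_abs]
  rw [integral_const_mul]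
  have hmoment := integral_abs_prod_mul_prod_le_one hmeas hindep hL2 hmean hvar
    (Finset.univ.image (K ∘ x)) (Finset.univ.image (K ∘ y))
  simp only [abs_mul] at hmoment
  exact mul_le_of_le_one_right (by positivity) hmoment

include hmean hvar in
lemma integral_mul_prod_cell_mul_prod_cell_le_indicator :
    ∫ ω, g x * g y * ((∏ i, ξ (K (x i)) ω) * ∏ i, ξ (K (y i)) ω) ∂P ≤
      (cellPermPairs K).indicator (fun z => |g z.1| * |g z.2|) (x, y) := by
  rcases eq_or_ne (g x * g y) 0 with h0 | h0
  · simp only [h0, zero_mul, integral_zero]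
    exact Set.indicator_nonneg (fun _ _ => by positivity) _
  have hx' := hx (left_ne_zero_of_mul h0)
  have hy' := hy (right_ne_zero_of_mul h0)
  simp only [prod_cell_eq_prod_image hx', prod_cell_eq_prod_image hy']
  rw [integral_const_mul, integral_prod_mul_prod hmeas hindep hmean hvar]
  split_ifs with h
  · rw [Set.indicator_of_mem (mk_mem_cellPermPairs_of_image_eq hx' hy' h), mul_one, ← abs_mul]
    exact le_abs_self _
  · rw [mul_zero]
    exact Set.indicator_nonneg (fun _ _ => by positivity) _

end CellPairs

section SecondMoment

variable {Ω : Type*} [MeasurableSpace Ω] {P : Measure Ω} {ξ : ℕ → Ω → ℝ}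
  (hmeas : ∀ m, Measurable (ξ m)) (hindep : iIndepFun ξ P) (hL2 : ∀ m, MemLp (ξ m) 2 P)
  (hmean : ∀ m, ∫ ω, ξ m ω ∂P = 0) (hvar : ∀ m, ∫ ω, ξ m ω ^ 2 ∂P = 1)
  {α ι : Type*} [MeasurableSpace α] [Fintype ι] {μ : Measure α} [IsFiniteMeasure μ]
  {K : α → ℕ} (hK : Measurable K) {g : (ι → α) → ℝ}
  (hg : MemLp g 2 (Measure.pi fun _ : ι => μ))
  (hinj : ∀ᵐ x ∂Measure.pi fun _ : ι => μ, g x ≠ 0 → Function.Injective (K ∘ x))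
include hmeas hindep hL2 hmean hvar hK hg hinj

lemma integrable_on_prod_mul_prod_cell_mul_prod_cell :
    Integrable (fun p : Ω × (ι → α) × (ι → α) =>
        g p.2.1 * g p.2.2 * ((∏ i, ξ (K (p.2.1 i)) p.1) * ∏ i, ξ (K (p.2.2 i)) p.1))
      (P.prod ((Measure.pi fun _ : ι => μ).prod (Measure.pi fun _ : ι => μ))) := by
  have := hindep.isProbabilityMeasure
  have hcell : ∀ i, Measurable fun p : Ω × (ι → α) => ξ (K (p.2 i)) p.1 := fun i =>
    (measurable_from_prod_countable_left (f := fun q : Ω × ℕ => ξ q.2 q.1) hmeas).comp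
      (measurable_fst.prodMk
        ((hK.comp (measurable_pi_apply i) : Measurable fun x : ι → α => K (x i)).comp
          measurable_snd))
  have hprod : ∀ j : (ι → α) × (ι → α) → ι → α, Measurable j →
      Measurable fun p : Ω × (ι → α) × (ι → α) => ∏ i, ξ (K (j p.2 i)) p.1 := fun j hj =>
    Finset.measurable_prod _ fun i _ =>
      (hcell i).comp (measurable_fst.prodMk (hj.comp measurable_snd))
  have hmeasΦ : AEStronglyMeasurable (fun p : Ω × (ι → α) × (ι → α) =>
      g p.2.1 * g p.2.2 * ((∏ i, ξ (K (p.2.1 i)) p.1) * ∏ i, ξ (K (p.2.2 i)) p.1))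
      (P.prod ((Measure.pi fun _ : ι => μ).prod (Measure.pi fun _ : ι => μ))) :=
    (hg.1.comp_fst.comp_snd.mul hg.1.comp_snd.comp_snd).mul
      ((hprod _ measurable_fst).mul (hprod _ measurable_snd)).aestronglyMeasurable
  have hgood := (Measure.quasiMeasurePreserving_fst.ae hinj).and
    (Measure.quasiMeasurePreserving_snd.ae hinj)
  refine (integrable_prod_iff' hmeasΦ).mpr ⟨?_, ?_⟩
  · filter_upwards [hgood] with z hz
    exact integrable_mul_prod_cell_mul_prod_cell hmeas hindep hL2 g hz.1 hz.2
  · refine Integrable.mono' ((hg.integrable one_le_two).abs.mul_prod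
      (hg.integrable one_le_two).abs) ?_ ?_
    · exact hmeasΦ.norm.prod_swap.integral_prod_right'
    · filter_upwards [hgood] with z hz
      rw [Real.norm_eq_abs, abs_of_nonneg (integral_nonneg fun _ => norm_nonneg _)]
      exact integral_norm_mul_prod_cell_mul_prod_cell_le hmeas hindep hL2 hmean hvar g hz.1 hz.2

theorem integral_sq_integral_mul_prod_cell_le {c : ℝ} (hc : ∀ m, μ.real (K ⁻¹' {m}) ≤ c) :
    ∫ ω, (∫ x, g x * ∏ i, ξ (K (x i)) ω ∂Measure.pi fun _ : ι => μ) ^ 2 ∂P ≤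
      (Fintype.card ι).factorial * c ^ Fintype.card ι *
        ∫ x, g x ^ 2 ∂Measure.pi fun _ : ι => μ := by
  classical
  have := hindep.isProbabilityMeasure
  set ν := Measure.pi fun _ : ι => μ
  have hΦ := integrable_on_prod_mul_prod_cell_mul_prod_cell hmeas hindep hL2 hmean hvar hK hg hinj
  have hc0 : 0 ≤ c := measureReal_nonneg.trans (hc 0)
  have hslice : ∀ x, ν.real (Prod.mk x ⁻¹' cellPermPairs K) ≤
      (Fintype.card ι).factorial * c ^ Fintype.card ι := fun x => by
    have := measure_preimage_mk_cellPermPairs_le (μ := μ)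
      (fun m => (ENNReal.le_ofReal_iff_toReal_le (measure_ne_top _ _) hc0).mpr (hc m)) x
    simpa [Measure.real, ENNReal.toReal_ofReal hc0] using ENNReal.toReal_mono (by finiteness) this
  have hsq : ∀ ω, (∫ x, g x * ∏ i, ξ (K (x i)) ω ∂ν) ^ 2 = ∫ z, g z.1 * g z.2 *
      ((∏ i, ξ (K (z.1 i)) ω) * ∏ i, ξ (K (z.2 i)) ω) ∂ν.prod ν := fun ω => by
    rw [sq, ← integral_prod_mul]
    congr 1 with z
    ring
  have hgood := (Measure.quasiMeasurePreserving_fst.ae hinj).and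
    (Measure.quasiMeasurePreserving_snd.ae hinj)
  calc _ = ∫ ω, ∫ z, g z.1 * g z.2 *
        ((∏ i, ξ (K (z.1 i)) ω) * ∏ i, ξ (K (z.2 i)) ω) ∂ν.prod ν ∂P := by simp_rw [hsq]
    _ = ∫ z, ∫ ω, g z.1 * g z.2 *
        ((∏ i, ξ (K (z.1 i)) ω) * ∏ i, ξ (K (z.2 i)) ω) ∂P ∂ν.prod ν :=
      integral_integral_swap hΦ
    _ ≤ ∫ z in cellPermPairs K, |g z.1| * |g z.2| ∂ν.prod ν := by
      rw [← integral_indicator (measurableSet_cellPermPairs hK)]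
      refine integral_mono_ae hΦ.integral_prod_right (((hg.integrable one_le_two).abs.mul_prod
        (hg.integrable one_le_two).abs).indicator (measurableSet_cellPermPairs hK)) ?_
      filter_upwards [hgood] with z hz
      exact integral_mul_prod_cell_mul_prod_cell_le_indicator hmeas hindep hmean hvar g hz.1 hz.2
    _ ≤ _ := setIntegral_abs_mul_abs_le_of_preimage_swap_eq (measurableSet_cellPermPairs hK)
      preimage_swap_cellPermPairs hslice hg

end SecondMoment

lemma floor_div_ne_of_le_abs_sub {a b c : ℝ} (ha : 0 ≤ a) (hb : 0 ≤ b) (hc : 0 < c)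
    (hab : c ≤ |a - b|) : ⌊a / c⌋₊ ≠ ⌊b / c⌋₊ := by
  intro h
  have hfloor : ⌊a / c⌋ = ⌊b / c⌋ := by
    rw [← Int.natCast_floor_eq_floor (by positivity), ← Int.natCast_floor_eq_floor (by positivity),
      h]
  have := Int.abs_sub_lt_one_of_floor_eq_floor hfloor
  rw [← sub_div, abs_div, abs_of_pos hc, div_lt_one hc] at this
  linarith

lemma measureReal_restrict_Icc_floor_div_preimage_le {c : ℝ} (hc : 0 < c) (t : ℝ) (m : ℕ) :
    (volume.restrict (Set.Icc 0 t)).real ((fun s : ℝ => ⌊s / c⌋₊) ⁻¹' {m}) ≤ c := by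
  have hsub : (fun s : ℝ => ⌊s / c⌋₊) ⁻¹' {m} ∩ Set.Icc 0 t ⊆ Set.Ico (m * c) ((m + 1) * c) := by
    rintro s ⟨hs, hst, -⟩
    have := (Nat.floor_eq_iff (div_nonneg hst hc.le)).mp hs
    rw [le_div_iff₀ hc, div_lt_iff₀ hc] at this
    exact this
  rw [measureReal_def, Measure.restrict_apply' measurableSet_Icc]
  calc _ ≤ (volume (Set.Ico (m * c) ((m + 1) * c))).toReal :=
        ENNReal.toReal_mono (by simp) (measure_mono hsub)
    _ = c := by rw [Real.volume_Ico, ENNReal.toReal_ofReal (by nlinarith)]; ring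

section SeparationCutoff

variable {ι : Type*} [Fintype ι] [DecidableEq ι]

noncomputable def separationCutoff (ε : ℝ) (x : ι → ℝ) : ℝ :=
  ∏ i, ∏ j ∈ Finset.univ.erase i, if ε < |x i - x j| then 1 else 0

lemma measurable_separationCutoff (ε : ℝ) : Measurable (separationCutoff (ι := ι) ε) :=
  Finset.measurable_prod _ fun i _ => Finset.measurable_prod _ fun j _ =>
    Measurable.ite (measurableSet_lt measurable_const
      ((measurable_pi_apply i).sub (measurable_pi_apply j)).abs) measurable_const measurable_const

lemma abs_separationCutoff_le_one (ε : ℝ) (x : ι → ℝ) : |separationCutoff ε x| ≤ 1 := by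
  rw [separationCutoff, Finset.abs_prod]
  refine Finset.prod_le_one (fun _ _ => abs_nonneg _) fun i _ => ?_
  rw [Finset.abs_prod]
  exact Finset.prod_le_one (fun _ _ => abs_nonneg _) fun j _ => by split_ifs <;> simp

lemma injective_floor_div_of_separationCutoff_ne_zero {ε c : ℝ} {x : ι → ℝ} (hx : ∀ i, 0 ≤ x i)
    (hc : 0 < c) (hcε : c ≤ ε) (h : separationCutoff ε x ≠ 0) :
    Function.Injective fun i => ⌊x i / c⌋₊ := by
  intro i j hij
  by_contra hne
  have hsep := Finset.prod_ne_zero_iff.mp (Finset.prod_ne_zero_iff.mp h i (Finset.mem_univ i)) j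
    (Finset.mem_erase.mpr ⟨Ne.symm hne, Finset.mem_univ j⟩)
  rw [Ne, ite_eq_right_iff, not_forall] at hsep
  exact floor_div_ne_of_le_abs_sub (hx i) (hx j) hc (hcε.trans hsep.1.le) hij

end SeparationCutoff

section Separated

variable {Ω : Type*} [MeasurableSpace Ω] {P : Measure Ω} {ξ : ℕ → Ω → ℝ}
  (hmeas : ∀ m, Measurable (ξ m)) (hindep : iIndepFun ξ P) (hL2 : ∀ m, MemLp (ξ m) 2 P)
  (hmean : ∀ m, ∫ ω, ξ m ω ∂P = 0) (hvar : ∀ m, ∫ ω, ξ m ω ^ 2 ∂P = 1)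
  {ι : Type*} [Fintype ι] [DecidableEq ι]
include hmeas hindep hL2 hmean hvar

theorem integral_sq_setIntegral_separationCutoff_le {f : (ι → ℝ) → ℝ} (hf : Measurable f) {t : ℝ}
    (hfL2 : IntegrableOn (fun x => f x ^ 2) (Set.univ.pi fun _ => Set.Icc 0 t))
    {ε c : ℝ} (hc : 0 < c) (hcε : c ≤ ε) :
    ∫ ω, (∫ x in Set.univ.pi (fun _ => Set.Icc 0 t),
        f x * separationCutoff ε x * ∏ i, ξ ⌊x i / c⌋₊ ω) ^ 2 ∂P ≤
      (Fintype.card ι).factorial * c ^ Fintype.card ι *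
        ∫ x in Set.univ.pi (fun _ => Set.Icc 0 t), f x ^ 2 := by
  set A : Set (ι → ℝ) := Set.univ.pi fun _ => Set.Icc 0 t
  have hA : volume.restrict A = Measure.pi fun _ : ι => volume.restrict (Set.Icc 0 t) := by
    rw [volume_pi, Measure.restrict_pi_pi]
  have hf2 : MemLp f 2 (volume.restrict A) :=
    (memLp_two_iff_integrable_sq hf.aestronglyMeasurable).mpr hfL2
  have hle : ∀ x, |f x * separationCutoff ε x| ≤ |f x| := fun x => by
    rw [abs_mul]
    exact mul_le_of_le_one_right (abs_nonneg _) (abs_separationCutoff_le_one ε x)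
  have hg : MemLp (fun x => f x * separationCutoff ε x) 2 (volume.restrict A) :=
    hf2.of_le (hf.mul (measurable_separationCutoff ε)).aestronglyMeasurable
      (ae_of_all _ fun x => by simpa only [Real.norm_eq_abs] using hle x)
  have hinj : ∀ᵐ x ∂volume.restrict A, f x * separationCutoff ε x ≠ 0 →
      Function.Injective ((fun s : ℝ => ⌊s / c⌋₊) ∘ x) := by
    filter_upwards [ae_restrict_mem (MeasurableSet.univ_pi fun _ => measurableSet_Icc)]
      with x hx hfx
    exact injective_floor_div_of_separationCutoff_ne_zero (fun i => (hx i trivial).1) hc hcε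
      (right_ne_zero_of_mul hfx)
  have hgf : ∫ x in A, (f x * separationCutoff ε x) ^ 2 ≤ ∫ x in A, f x ^ 2 :=
    integral_mono hg.integrable_sq hf2.integrable_sq fun x => sq_le_sq.mpr (hle x)
  rw [hA] at hg hinj ⊢
  refine (integral_sq_integral_mul_prod_cell_le hmeas hindep hL2 hmean hvar
    (Nat.measurable_floor.comp (measurable_id.div_const _) : Measurable fun s : ℝ => ⌊s / c⌋₊)
    hg hinj (measureReal_restrict_Icc_floor_div_preimage_le hc t)).trans ?_
  rw [← hA]
  gcongr

end Separated

theorem stmt_6_general {Ω : Type*} [MeasurableSpace Ω] (P : Measure Ω) [IsProbabilityMeasure P]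
    (ξ : ℕ → Ω → ℝ) (hmeas : ∀ k, Measurable (ξ k))
    (hindep : iIndepFun ξ P)
    (hident : ∀ k, IdentDistrib (ξ k) (ξ 0) P P)
    (hL2 : MemLp (ξ 0) 2 P)
    (hmean : ∫ ω, ξ 0 ω ∂P = 0)
    (hvar : ∫ ω, (ξ 0 ω) ^ 2 ∂P = 1)
    (ε : ℝ) (hε : ε ∈ Set.Ioo (0 : ℝ) 1)
    (θ : ℝ → Ω → ℝ) (hθ : ∀ s ω, θ s ω = ε⁻¹ * ξ ⌊s / ε ^ 2⌋₊ ω)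
    (T : ℝ) (n : ℕ) (f : (Fin n → ℝ) → ℝ) (hfmeas : Measurable f)
    (hfL2 : IntegrableOn (fun x => f x ^ 2)
      (Set.univ.pi fun _ : Fin n => Set.Icc (0 : ℝ) T))
    (t : ℝ) (ht : t ∈ Set.Icc (0 : ℝ) T) :
    ∫ ω, (∫ x in Set.univ.pi (fun _ : Fin n => Set.Icc (0 : ℝ) t),
        f x * ∏ i, θ (x i) ω *
          ∏ j ∈ Finset.univ.erase i, if ε < |x i - x j| then (1 : ℝ) else 0) ^ 2 ∂P
      ≤ (Nat.factorial n) *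
        ∫ x in Set.univ.pi (fun _ : Fin n => Set.Icc (0 : ℝ) T), f x ^ 2 := by
  obtain ⟨hε0, hε1⟩ := hε
  have hAT : (Set.univ.pi fun _ : Fin n => Set.Icc (0 : ℝ) t) ⊆
      Set.univ.pi fun _ => Set.Icc 0 T := Set.pi_mono fun _ _ => Set.Icc_subset_Icc_right ht.2
  have hmoment := integral_sq_setIntegral_separationCutoff_le hmeas hindep
    (fun m => (hident m).memLp_iff.mpr hL2) (fun m => (hident m).integral_eq.trans hmean)
    (fun m => ((hident m).comp (measurable_id.pow_const 2)).integral_eq.trans hvar)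
    hfmeas (hfL2.mono_set hAT) (by positivity : 0 < ε ^ 2) (by nlinarith : ε ^ 2 ≤ ε)
  rw [Fintype.card_fin] at hmoment
  have hintegrand : ∀ ω x, f x * ∏ i, θ (x i) ω *
      ∏ j ∈ Finset.univ.erase i, (if ε < |x i - x j| then (1 : ℝ) else 0) =
      ε⁻¹ ^ n * (f x * separationCutoff ε x * ∏ i, ξ ⌊x i / ε ^ 2⌋₊ ω) := fun ω x => by
    simp only [hθ, separationCutoff, Finset.prod_mul_distrib, Finset.prod_const, Finset.card_univ,
      Fintype.card_fin]
    ring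
  have hscale : (ε⁻¹ ^ n) ^ 2 * (ε ^ 2) ^ n = 1 := by
    rw [← pow_mul, ← pow_mul, mul_comm n 2, ← mul_pow, inv_mul_cancel₀ hε0.ne', one_pow]
  simp_rw [hintegrand, integral_const_mul, mul_pow, integral_const_mul]
  calc _ ≤ (ε⁻¹ ^ n) ^ 2 * (n.factorial * (ε ^ 2) ^ n *
        ∫ x in Set.univ.pi (fun _ : Fin n => Set.Icc (0 : ℝ) t), f x ^ 2) := by gcongr
    _ = n.factorial * ∫ x in Set.univ.pi (fun _ : Fin n => Set.Icc (0 : ℝ) t), f x ^ 2 := by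
        linear_combination (n.factorial *
          ∫ x in Set.univ.pi (fun _ : Fin n => Set.Icc (0 : ℝ) t), f x ^ 2) * hscale
    _ ≤ _ := mul_le_mul_of_nonneg_left
        (setIntegral_mono_set hfL2 (ae_of_all _ fun x => sq_nonneg _) hAT.eventuallyLE)
        (Nat.cast_nonneg _)

/-- Donsker kernels: `ξ₁, ξ₂, …` i.i.d. with mean `0` and variance `1`, and
`θ_ε(s) = ε⁻¹ Σ_k ξ_k 1_{[k-1,k)}(s/ε²)` (i.e. `θ_ε(s) = ε⁻¹ ξ_{⌊s/ε²⌋}`).  For every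
symmetric `f ∈ L²([0,T]ⁿ)`, `ε ∈ (0,1)` and `t ∈ [0,T]`,
`E[(∫_{[0,t]ⁿ} f(x) ∏ᵢ θ_ε(xᵢ) ∏_{i≠j} 1_{|x_i-x_j|>ε} dx)²] ≤ n! ‖f‖²_{L²([0,T]ⁿ)}`. -/
theorem stmt_6 {Ω : Type*} [MeasurableSpace Ω] (P : Measure Ω) [IsProbabilityMeasure P]
    (ξ : ℕ → Ω → ℝ) (hmeas : ∀ k, Measurable (ξ k))
    (hindep : iIndepFun ξ P)
    (hident : ∀ k, IdentDistrib (ξ k) (ξ 0) P P)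
    (hL2 : MemLp (ξ 0) 2 P)
    (hmean : ∫ ω, ξ 0 ω ∂P = 0)
    (hvar : ∫ ω, (ξ 0 ω) ^ 2 ∂P = 1)
    (ε : ℝ) (hε : ε ∈ Set.Ioo (0 : ℝ) 1)
    (θ : ℝ → Ω → ℝ) (hθ : ∀ s ω, θ s ω = ε⁻¹ * ξ ⌊s / ε ^ 2⌋₊ ω)
    (T : ℝ) (n : ℕ) (f : (Fin n → ℝ) → ℝ) (hfmeas : Measurable f)
    (hfL2 : IntegrableOn (fun x => f x ^ 2)
      (Set.univ.pi fun _ : Fin n => Set.Icc (0 : ℝ) T))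
    (hsym : ∀ (σ : Equiv.Perm (Fin n)) (x : Fin n → ℝ), f (x ∘ σ) = f x)
    (t : ℝ) (ht : t ∈ Set.Icc (0 : ℝ) T) :
    ∫ ω, (∫ x in Set.univ.pi (fun _ : Fin n => Set.Icc (0 : ℝ) t),
        f x * ∏ i, θ (x i) ω *
          ∏ j ∈ Finset.univ.erase i, if ε < |x i - x j| then (1 : ℝ) else 0) ^ 2 ∂P
      ≤ (Nat.factorial n) *
        ∫ x in Set.univ.pi (fun _ : Fin n => Set.Icc (0 : ℝ) T), f x ^ 2 :=
  stmt_6_general P ξ hmeas hindep hident hL2 hmean hvar ε hε θ hθ T n f hfmeas hfL2 t ht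
end

section
/- Let (η_ε)_{ε>0} be processes of the form η_ε(t) = ∫₀ᵗ θ_ε(s) ds with θ_ε ∈ L²([0,T]) a.s., whose finite dimensional distributions converge to those of a standard Brownian motion W as ε → 0. Let f ∈ E'ⁿ be a simple function f = ∑_{k=1}^m α_k 1_{Δ_k}, where each Δ_k = (a_k¹,b_k¹] × ⋯ × (a_kⁿ,b_kⁿ] is a product of pairwise disjoint intervals. Define Y_ε^f(t) = ∫_{[0,t]ⁿ} f(x) ∏ᵢ θ_ε(xᵢ) ∏_{i≠j} 1_{|x_i - x_j| > ε} dx. Then the finite dimensional distributions of Y_ε^f converge, as ε → 0, to those of the multiple Wiener-Itô integral t ↦ I_n(f · 1_{[0,t]ⁿ}); explicitly, for such f, the limit at time t equals ∑_{k=1}^m α_k ∏_{i=1}^n (W(b_kⁱ ∧ t) - W(a_kⁱ ∧ t)). -/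
/-!
Once `ε` is smaller than every gap between the intervals of a rectangle `Δ_k`, the cutoff
`∏_{i≠j} 1_{|x_i - x_j| > ε}` is identically `1` on `Δ_k`, so by Fubini
`Y_ε^f(t) = Σ_k α_k ∏_i (η_ε(b_kⁱ ∧ t) - η_ε(a_kⁱ ∧ t))`.  This is one fixed continuous function
of finitely many values of `η_ε`, and composing the test function with it transfers the
convergence of the finite dimensional distributions of `η_ε` to `Y_ε^f`.
-/

open MeasureTheory ProbabilityTheory Filter Topology BoundedContinuousFunction

section

open Set

theorem eventually_lt_abs_sub_of_disjoint_Icc {a b a' b' : ℝ}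
    (h : Disjoint (Icc a b) (Icc a' b')) :
    ∀ᶠ ε in 𝓝 (0 : ℝ), ∀ x ∈ Icc a b, ∀ y ∈ Icc a' b', ε < |x - y| := by
  obtain ⟨r, hr, hsep⟩ := Metric.exists_pos_forall_lt_edist isCompact_Icc isClosed_Icc h
  filter_upwards [eventually_lt_nhds (NNReal.coe_pos.2 hr)] with ε hε x hx y hy
  have hxy := hsep x hx y hy
  rw [edist_dist, Real.dist_eq, ENNReal.coe_lt_ofReal] at hxy
  exact hε.trans hxy

theorem eventually_pairwise_lt_abs_sub_of_pairwise_disjoint_Icc {ι : Type*} [Finite ι]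
    {a b : ι → ℝ} (h : Pairwise fun i j => Disjoint (Icc (a i) (b i)) (Icc (a j) (b j))) :
    ∀ᶠ ε in 𝓝 (0 : ℝ), Pairwise fun i j =>
      ∀ x ∈ Icc (a i) (b i), ∀ y ∈ Icc (a j) (b j), ε < |x - y| := by
  simp only [Pairwise, eventually_all]
  exact fun i j hij => eventually_lt_abs_sub_of_disjoint_Icc (h hij)

theorem Icc_zero_inter_Ioc_eq_Ioc_min {a b t : ℝ} (ha : 0 ≤ a) :
    Icc 0 t ∩ Ioc a b = Ioc (min a t) (min b t) := by
  ext s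
  simp only [mem_inter_iff, mem_Icc, mem_Ioc]
  grind

theorem setIntegral_Icc_zero_indicator_Ioc {φ : ℝ → ℝ} {a b t : ℝ} (ha : 0 ≤ a) (hab : a ≤ b)
    (ht : 0 ≤ t) (hφ : IntegrableOn φ (Icc 0 t)) :
    ∫ s in Icc 0 t, (Ioc a b).indicator φ s =
      (∫ s in 0..min b t, φ s) - ∫ s in 0..min a t, φ s := by
  have hφ' : ∀ c, 0 ≤ c → IntervalIntegrable φ volume 0 (min c t) := fun c hc =>
    IntegrableOn.intervalIntegrable <| hφ.mono_set <| by
      rw [uIcc_of_le (le_min hc ht)]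
      exact Icc_subset_Icc_right (min_le_right c t)
  rw [setIntegral_indicator measurableSet_Ioc, Icc_zero_inter_Ioc_eq_Ioc_min ha,
    intervalIntegral.integral_interval_sub_left (hφ' b (ha.trans hab)) (hφ' a ha),
    intervalIntegral.integral_of_le (min_le_min_right t hab)]

variable {ι : Type*} [Fintype ι]

theorem prod_indicator_mul_prod_cutoff [DecidableEq ι] {ε : ℝ} {a b : ι → ℝ}
    (hgap : Pairwise fun i j => ∀ x ∈ Icc (a i) (b i), ∀ y ∈ Icc (a j) (b j), ε < |x - y|)
    (φ : ℝ → ℝ) (x : ι → ℝ) :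
    ((∏ i, if x i ∈ Ioc (a i) (b i) then (1 : ℝ) else 0) *
      ∏ i, φ (x i) * ∏ j ∈ Finset.univ.erase i, if ε < |x i - x j| then (1 : ℝ) else 0) =
      ∏ i, (Ioc (a i) (b i)).indicator φ (x i) := by
  by_cases hx : ∀ i, x i ∈ Ioc (a i) (b i)
  · have hcut : ∀ i, ∀ j ∈ Finset.univ.erase i, ε < |x i - x j| := fun i j hj =>
      hgap (Finset.ne_of_mem_erase hj).symm _ (Ioc_subset_Icc_self (hx i)) _
        (Ioc_subset_Icc_self (hx j))
    simp only [hx, if_true, Finset.prod_const_one, one_mul, indicator_of_mem]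
    exact Finset.prod_congr rfl fun i _ => by
      rw [Finset.prod_eq_one fun j hj => if_pos (hcut i j hj), mul_one]
  · obtain ⟨i, hi⟩ := not_forall.1 hx
    rw [Finset.prod_eq_zero (Finset.mem_univ i) (if_neg hi), zero_mul]
    exact (Finset.prod_eq_zero (Finset.mem_univ i) (indicator_of_notMem hi φ)).symm

theorem setIntegral_sum_prod_indicator_mul_prod_cutoff {κ : Type*} [Fintype κ] [DecidableEq ι]
    {ε t : ℝ} {φ : ℝ → ℝ} (α : κ → ℝ) {a b : κ → ι → ℝ} (ha : ∀ k i, 0 ≤ a k i)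
    (hab : ∀ k i, a k i ≤ b k i) (ht : 0 ≤ t) (hφ : IntegrableOn φ (Icc 0 t))
    (hgap : ∀ k, Pairwise fun i j =>
      ∀ x ∈ Icc (a k i) (b k i), ∀ y ∈ Icc (a k j) (b k j), ε < |x - y|) :
    (∫ x in univ.pi fun _ : ι => Icc 0 t,
      (∑ k, α k * ∏ i, if x i ∈ Ioc (a k i) (b k i) then (1 : ℝ) else 0) *
        ∏ i, φ (x i) * ∏ j ∈ Finset.univ.erase i, if ε < |x i - x j| then (1 : ℝ) else 0) =
      ∑ k, α k * ∏ i, ((∫ s in 0..min (b k i) t, φ s) - ∫ s in 0..min (a k i) t, φ s) := by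
  have hind : ∀ k i, IntegrableOn ((Ioc (a k i) (b k i)).indicator φ) (Icc 0 t) :=
    fun k i => hφ.indicator measurableSet_Ioc
  simp_rw [Finset.sum_mul, mul_assoc, prod_indicator_mul_prod_cutoff (hgap _), volume_pi,
    Measure.restrict_pi_pi]
  rw [integral_finsetSum _ fun k _ => ((Integrable.fintype_prod (hind k)).const_mul (α k))]
  refine Finset.sum_congr rfl fun k _ => ?_
  rw [integral_const_mul, integral_fintype_prod_eq_prod]
  simp_rw [setIntegral_Icc_zero_indicator_Ioc (ha k _) (hab k _) ht hφ]

theorem tendsto_integral_comp_of_fdd {Ω : Type*} [MeasurableSpace Ω] {P : Measure Ω}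
    {X : ℝ → ℝ → Ω → ℝ} {Y : ℝ → Ω → ℝ} {S : Set ℝ} {l : Filter ℝ}
    (hfdd : ∀ (r : ℕ) (ts : Fin r → ℝ), (∀ i, ts i ∈ S) →
      ∀ g : BoundedContinuousFunction (Fin r → ℝ) ℝ,
      Tendsto (fun ε => ∫ ω, g (fun i => X ε (ts i) ω) ∂P) l
        (𝓝 (∫ ω, g (fun i => Y (ts i) ω) ∂P)))
    {κ : Type*} [Fintype κ] (ts : κ → ℝ) (hts : ∀ j, ts j ∈ S)
    {E : Type*} [TopologicalSpace E] (F : C(κ → ℝ, E)) (g : BoundedContinuousFunction E ℝ) :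
    Tendsto (fun ε => ∫ ω, g (F fun j => X ε (ts j) ω) ∂P) l
      (𝓝 (∫ ω, g (F fun j => Y (ts j) ω) ∂P)) := by
  let e := Fintype.equivFin κ
  let reindex : C((Fin (Fintype.card κ)) → ℝ, κ → ℝ) := ⟨fun v j => v (e j), by fun_prop⟩
  simpa only [Function.comp_apply, compContinuous_apply, ContinuousMap.comp_apply,
    ContinuousMap.coe_mk, Equiv.symm_apply_apply, reindex] using
    hfdd _ (ts ∘ e.symm) (fun j => hts _) (g.compContinuous (F.comp reindex))

end

theorem stmt_8_general {Ω : Type*} [MeasurableSpace Ω] (P : Measure Ω)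
    (T : ℝ)
    (W : ℝ → Ω → ℝ)
    (θ : ℝ → ℝ → Ω → ℝ)
    (hθL2 : ∀ ε > (0 : ℝ), ∀ ω, MemLp (fun s => θ ε s ω) 2
      (MeasureTheory.volume.restrict (Set.Icc 0 T)))
    (η : ℝ → ℝ → Ω → ℝ) (hη : ∀ ε t ω, η ε t ω = ∫ s in (0 : ℝ)..t, θ ε s ω)
    (hfdd : ∀ (r : ℕ) (ts : Fin r → ℝ), (∀ i, ts i ∈ Set.Icc (0 : ℝ) T) →
      ∀ g : BoundedContinuousFunction (Fin r → ℝ) ℝ,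
      Tendsto (fun ε => ∫ ω, g (fun i => η ε (ts i) ω) ∂P) (𝓝[>] (0 : ℝ))
        (𝓝 (∫ ω, g (fun i => W (ts i) ω) ∂P)))
    (n m : ℕ) (α : Fin m → ℝ) (a b : Fin m → Fin n → ℝ)
    (ha : ∀ k i, 0 ≤ a k i) (hab : ∀ k i, a k i ≤ b k i)
    (hdisj : ∀ k, Pairwise fun i j =>
      Disjoint (Set.Icc (a k i) (b k i)) (Set.Icc (a k j) (b k j))) :
    ∀ (r : ℕ) (ts : Fin r → ℝ), (∀ i, ts i ∈ Set.Icc (0 : ℝ) T) →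
      ∀ g : BoundedContinuousFunction (Fin r → ℝ) ℝ,
      Tendsto
        (fun ε => ∫ ω, g (fun i =>
          ∫ x in Set.univ.pi (fun _ : Fin n => Set.Icc (0 : ℝ) (ts i)),
            (∑ k, α k * ∏ l, if x l ∈ Set.Ioc (a k l) (b k l) then (1 : ℝ) else 0) *
              ∏ l, θ ε (x l) ω *
                ∏ l' ∈ Finset.univ.erase l, if ε < |x l - x l'| then (1 : ℝ) else 0) ∂P)
        (𝓝[>] (0 : ℝ))
        (𝓝 (∫ ω, g (fun i =>
          ∑ k, α k * ∏ l, (W (min (b k l) (ts i)) ω - W (min (a k l) (ts i)) ω)) ∂P)) := by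
  intro r ts hts g
  let times : Fin r × Fin m × Fin n × Bool → ℝ := fun ⟨i, k, l, c⟩ =>
    min (cond c (b k l) (a k l)) (ts i)
  have htimes : ∀ j, times j ∈ Set.Icc 0 T := fun ⟨i, k, l, c⟩ =>
    ⟨le_min (by cases c; exacts [ha k l, (ha k l).trans (hab k l)]) (hts i).1,
      (min_le_right _ _).trans (hts i).2⟩
  let F : C(Fin r × Fin m × Fin n × Bool → ℝ, Fin r → ℝ) :=
    ⟨fun v i => ∑ k, α k * ∏ l, (v (i, k, l, true) - v (i, k, l, false)), by fun_prop⟩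
  have hgap : ∀ᶠ ε in 𝓝[>] (0 : ℝ), ∀ k, Pairwise fun i j =>
      ∀ x ∈ Set.Icc (a k i) (b k i), ∀ y ∈ Set.Icc (a k j) (b k j), ε < |x - y| :=
    nhdsWithin_le_nhds <| eventually_all.2 fun k =>
      eventually_pairwise_lt_abs_sub_of_pairwise_disjoint_Icc (hdisj k)
  refine (tendsto_integral_comp_of_fdd hfdd times htimes F g).congr' ?_
  filter_upwards [hgap, self_mem_nhdsWithin] with ε hε hεpos
  refine integral_congr_ae (Eventually.of_forall fun ω => congrArg g (funext fun i => ?_))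
  have hθ : IntegrableOn (fun s => θ ε s ω) (Set.Icc 0 (ts i)) :=
    IntegrableOn.mono_set ((hθL2 ε hεpos ω).integrable one_le_two)
      (Set.Icc_subset_Icc_right (hts i).2)
  rw [setIntegral_sum_prod_indicator_mul_prod_cutoff α ha hab (hts i).1 hθ hε]
  simp only [hη, ContinuousMap.coe_mk, cond_true, cond_false, F, times]

/-- Let `η_ε(t) = ∫₀ᵗ θ_ε(s) ds` have paths in the Cameron–Martin space and suppose
the finite dimensional distributions of `η_ε` converge to those of a standard Brownian
motion `W`.  Let `f = Σ_k α_k 1_{Δ_k}` be a simple function whose rectangles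
`Δ_k = (a_k¹,b_k¹] × ⋯ × (a_kⁿ,b_kⁿ]` are products of pairwise disjoint intervals, and
`Y_ε^f(t) = ∫_{[0,t]ⁿ} f(x) ∏ᵢ θ_ε(xᵢ) ∏_{i≠j} 1_{|x_i-x_j|>ε} dx`.  Then the finite
dimensional distributions of `Y_ε^f` converge, as `ε → 0`, to those of the multiple
Wiener–Itô integral `t ↦ I_n(f·1_{[0,t]ⁿ})`, which for such `f` equals
`Σ_k α_k ∏ᵢ (W(b_kⁱ ∧ t) − W(a_kⁱ ∧ t))`. -/
theorem stmt_8 {Ω : Type*} [MeasurableSpace Ω] (P : Measure Ω) [IsProbabilityMeasure P]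
    (T : ℝ) (hT : 0 ≤ T)
    (W : ℝ → Ω → ℝ) (hWmeas : ∀ t, Measurable (W t))
    (hW0 : ∀ ω, W 0 ω = 0) (hWcont : ∀ ω, Continuous fun t => W t ω)
    (hWgauss : ∀ s t : ℝ, 0 ≤ s → s ≤ t →
      Measure.map (fun ω => W t ω - W s ω) P = gaussianReal 0 (Real.toNNReal (t - s)))
    (hWindep : ∀ (m : ℕ) (u : Fin (m + 1) → ℝ), Monotone u →
      iIndepFun
        (fun i : Fin m => fun ω => W (u i.succ) ω - W (u i.castSucc) ω) P)
    (θ : ℝ → ℝ → Ω → ℝ) (hθmeas : ∀ ε, Measurable fun p : ℝ × Ω => θ ε p.1 p.2)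
    (hθL2 : ∀ ε > (0 : ℝ), ∀ ω, MemLp (fun s => θ ε s ω) 2
      (MeasureTheory.volume.restrict (Set.Icc 0 T)))
    (η : ℝ → ℝ → Ω → ℝ) (hη : ∀ ε t ω, η ε t ω = ∫ s in (0 : ℝ)..t, θ ε s ω)
    (hfdd : ∀ (r : ℕ) (ts : Fin r → ℝ), (∀ i, ts i ∈ Set.Icc (0 : ℝ) T) →
      ∀ g : BoundedContinuousFunction (Fin r → ℝ) ℝ,
      Tendsto (fun ε => ∫ ω, g (fun i => η ε (ts i) ω) ∂P) (𝓝[>] (0 : ℝ))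
        (𝓝 (∫ ω, g (fun i => W (ts i) ω) ∂P)))
    (n m : ℕ) (α : Fin m → ℝ) (a b : Fin m → Fin n → ℝ)
    (ha : ∀ k i, 0 ≤ a k i) (hab : ∀ k i, a k i ≤ b k i) (hbT : ∀ k i, b k i ≤ T)
    (hdisj : ∀ k, Pairwise fun i j =>
      Disjoint (Set.Icc (a k i) (b k i)) (Set.Icc (a k j) (b k j))) :
    ∀ (r : ℕ) (ts : Fin r → ℝ), (∀ i, ts i ∈ Set.Icc (0 : ℝ) T) →
      ∀ g : BoundedContinuousFunction (Fin r → ℝ) ℝ,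
      Tendsto
        (fun ε => ∫ ω, g (fun i =>
          ∫ x in Set.univ.pi (fun _ : Fin n => Set.Icc (0 : ℝ) (ts i)),
            (∑ k, α k * ∏ l, if x l ∈ Set.Ioc (a k l) (b k l) then (1 : ℝ) else 0) *
              ∏ l, θ ε (x l) ω *
                ∏ l' ∈ Finset.univ.erase l, if ε < |x l - x l'| then (1 : ℝ) else 0) ∂P)
        (𝓝[>] (0 : ℝ))
        (𝓝 (∫ ω, g (fun i =>
          ∑ k, α k * ∏ l, (W (min (b k l) (ts i)) ω - W (min (a k l) (ts i)) ω)) ∂P)) :=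
  stmt_8_general P T W θ hθL2 η hη hfdd n m α a b ha hab hdisj
end
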